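/- arXiv:1708.02966 — 5 statements merged into one kernel-verified Lean document; each statement's English description precedes it below -/
import Mathlib

section
/- There is a universal constant C > 0 such that the following holds. Let X be a random variable with the binomial distribution Bin(N, α) for some integer N ≥ 1 and α ∈ (0,1), let q ≥ 1, and set B := q/(α·max(N, q)). If B ≥ e then ‖X‖_q ≤ C·q/log B, and if B < e then ‖X‖_q ≤ C·q/B. -/
open MeasureTheory ProbabilityTheory Finset Real

/-- The `q`-th moment norm `(E|Y|^q)^(1/q)` of a real random variable. -/
noncomputable def pnorm {Ω : Type*} [MeasureSpace Ω] (Y : Ω → ℝ) (q : ℝ) : ℝ :=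
  (∫ ω, |Y ω| ^ q) ^ (1 / q)

/-- `X` has the binomial distribution `Bin(N, α)` (as a real-valued random variable). -/
def HasBinomialDist {Ω : Type*} [MeasureSpace Ω] (X : Ω → ℝ) (N : ℕ) (α : ℝ) : Prop :=
  ∀ k : ℕ, ℙ {ω | X ω = (k : ℝ)} =
    ENNReal.ofReal ((N.choose k : ℝ) * α ^ k * (1 - α) ^ (N - k))

/-
Chernoff-type moment bound: since `x ^ q ≤ (q / (e l)) ^ q * exp (l x)` for every `l > 0`,
`E X ^ q ≤ (q / (e l)) ^ q * E exp (l X) ≤ (q / (e l)) ^ q * exp (α N (e ^ l - 1))`, and choosing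
`l = log (1 + B)` makes the last exponent at most `q`, whence `‖X‖_q ≤ q / log (1 + B)`.
It remains to note `log (1 + B) ≥ log B`, and `log (1 + B) ≥ B / 4` when `B < e`.
-/

theorem rpow_le_mul_exp {x q l : ℝ} (hx : 0 ≤ x) (hq : 0 < q) (hl : 0 < l) :
    x ^ q ≤ (q / (exp 1 * l)) ^ q * exp (l * x) := by
  have hc : 0 < q / (exp 1 * l) := by positivity
  have hx_eq : x = q / (exp 1 * l) * (exp 1 * (l * x / q)) := by field_simp
  calc x ^ q = (q / (exp 1 * l)) ^ q * (exp 1 * (l * x / q)) ^ q := by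
        rw [← mul_rpow hc.le (by positivity), ← hx_eq]
    _ ≤ (q / (exp 1 * l)) ^ q * exp (l * x / q) ^ q := by
        gcongr
        exact exp_one_mul_le_exp
    _ = (q / (exp 1 * l)) ^ q * exp (l * x) := by
        rw [← exp_mul, div_mul_cancel₀ _ hq.ne']

theorem pnorm_le_of_integral_le {Ω : Type*} [MeasureSpace Ω] {Y : Ω → ℝ} {q M : ℝ}
    (hq : 0 < q) (hM : 0 ≤ M) (h : ∫ ω, |Y ω| ^ q ≤ M ^ q) : pnorm Y q ≤ M := by
  calc pnorm Y q ≤ (M ^ q) ^ (1 / q) :=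
        rpow_le_rpow (integral_nonneg fun ω => by positivity) h (by positivity)
    _ = M := by rw [← rpow_mul hM, mul_one_div_cancel hq.ne', rpow_one]

def binomialWeight (N : ℕ) (α : ℝ) (k : ℕ) : ℝ :=
  N.choose k * α ^ k * (1 - α) ^ (N - k)

section binomialWeight

variable {N : ℕ} {α : ℝ}

theorem binomialWeight_nonneg (h0 : 0 ≤ α) (h1 : α ≤ 1) (k : ℕ) : 0 ≤ binomialWeight N α k := by
  unfold binomialWeight
  have : 0 ≤ 1 - α := by linarith
  positivity

theorem sum_binomialWeight_mul_pow (N : ℕ) (α t : ℝ) :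
    ∑ k ∈ range (N + 1), binomialWeight N α k * t ^ k = (α * t + (1 - α)) ^ N := by
  rw [add_pow]
  refine sum_congr rfl fun k _ => ?_
  simp only [binomialWeight, mul_pow]
  ring

theorem sum_binomialWeight (N : ℕ) (α : ℝ) : ∑ k ∈ range (N + 1), binomialWeight N α k = 1 := by
  simpa using sum_binomialWeight_mul_pow N α 1

theorem sum_binomialWeight_mul_exp_le (h0 : 0 ≤ α) (h1 : α ≤ 1) (l : ℝ) :
    ∑ k ∈ range (N + 1), binomialWeight N α k * exp (l * k) ≤ exp (α * N * (exp l - 1)) := by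
  have hbase : 0 ≤ α * exp l + (1 - α) := by have := exp_pos l; nlinarith
  calc ∑ k ∈ range (N + 1), binomialWeight N α k * exp (l * k)
      = (α * exp l + (1 - α)) ^ N := by
        simp_rw [mul_comm l, exp_nat_mul, sum_binomialWeight_mul_pow]
    _ ≤ exp (α * (exp l - 1)) ^ N := by
        gcongr
        linarith [add_one_le_exp (α * (exp l - 1))]
    _ = exp (α * N * (exp l - 1)) := by rw [← exp_nat_mul]; ring_nf

end binomialWeight

namespace HasBinomialDist

variable {Ω : Type*} [MeasureSpace Ω] {X : Ω → ℝ} {N : ℕ} {α : ℝ}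

theorem measure_eq (hX : HasBinomialDist X N α) (k : ℕ) :
    ℙ {ω | X ω = k} = ENNReal.ofReal (binomialWeight N α k) :=
  hX k

variable [IsProbabilityMeasure (ℙ : Measure Ω)]

theorem ae_exists_eq_natCast (hX : HasBinomialDist X N α) (hm : Measurable X)
    (h0 : 0 ≤ α) (h1 : α ≤ 1) : ∀ᵐ ω, ∃ k ∈ range (N + 1), X ω = k := by
  have hmeas : ∀ k : ℕ, MeasurableSet {ω | X ω = k} := fun k => hm (measurableSet_singleton _)
  have hdisj : (range (N + 1) : Set ℕ).PairwiseDisjoint fun k : ℕ => {ω | X ω = k} :=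
    fun i _ j _ hij => Set.disjoint_left.mpr fun ω hi hj =>
      hij (Nat.cast_injective ((hi : X ω = i).symm.trans hj))
  have hunion : ℙ (⋃ k ∈ range (N + 1), {ω | X ω = k}) = 1 := by
    rw [measure_biUnion_finset hdisj fun k _ => hmeas k, sum_congr rfl fun k _ => hX.measure_eq k,
      ← ENNReal.ofReal_sum_of_nonneg fun k _ => binomialWeight_nonneg h0 h1 k]
    exact (congrArg ENNReal.ofReal (sum_binomialWeight N α)).trans ENNReal.ofReal_one
  have hae := (ae_mem_iff_measure_eq (MeasurableSet.biUnion (range (N + 1)).countable_toSet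
    fun k _ => hmeas k).nullMeasurableSet).mpr (hunion.trans measure_univ.symm)
  simpa using hae

theorem integral_comp (hX : HasBinomialDist X N α) (hm : Measurable X)
    (h0 : 0 ≤ α) (h1 : α ≤ 1) (f : ℝ → ℝ) :
    ∫ ω, f (X ω) = ∑ k ∈ range (N + 1), binomialWeight N α k * f k := by
  have hmeas : ∀ k : ℕ, MeasurableSet {ω | X ω = k} := fun k => hm (measurableSet_singleton _)
  have hsum : (fun ω => f (X ω)) =ᵐ[ℙ]
      fun ω => ∑ k ∈ range (N + 1), {ω | X ω = k}.indicator (fun _ => f k) ω := by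
    filter_upwards [hX.ae_exists_eq_natCast hm h0 h1] with ω ⟨k, hk, hXk⟩
    have hother : ∀ j ∈ range (N + 1), j ≠ k → {ω | X ω = j}.indicator (fun _ => f j) ω = 0 :=
      fun j _ hjk => Set.indicator_of_notMem
        (fun hj => hjk (Nat.cast_injective ((hj : X ω = j).symm.trans hXk))) _
    rw [sum_eq_single_of_mem k hk hother, Set.indicator_of_mem (s := {ω | X ω = k}) hXk, hXk]
  rw [integral_congr_ae hsum, integral_finsetSum _ fun k _ =>
    (integrable_const _).indicator (hmeas k)]
  refine sum_congr rfl fun k _ => ?_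
  rw [integral_indicator_const _ (hmeas k), measureReal_def, hX.measure_eq k,
    ENNReal.toReal_ofReal (binomialWeight_nonneg h0 h1 k), smul_eq_mul]

theorem integral_abs_rpow_le (hX : HasBinomialDist X N α) (hm : Measurable X)
    (h0 : 0 ≤ α) (h1 : α ≤ 1) {q l : ℝ} (hq : 0 < q) (hl : 0 < l)
    (h : α * N * (exp l - 1) ≤ q) : ∫ ω, |X ω| ^ q ≤ (q / l) ^ q := by
  set c := q / (exp 1 * l)
  rw [hX.integral_comp hm h0 h1 fun x => |x| ^ q]
  calc ∑ k ∈ range (N + 1), binomialWeight N α k * |(k : ℝ)| ^ q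
      ≤ ∑ k ∈ range (N + 1), binomialWeight N α k * (c ^ q * exp (l * k)) := by
        gcongr with k
        · exact binomialWeight_nonneg h0 h1 k
        · rw [Nat.abs_cast]
          exact rpow_le_mul_exp k.cast_nonneg hq hl
    _ = c ^ q * ∑ k ∈ range (N + 1), binomialWeight N α k * exp (l * k) := by
        rw [mul_sum]
        exact sum_congr rfl fun k _ => by ring
    _ ≤ c ^ q * exp q := by
        gcongr
        exact (sum_binomialWeight_mul_exp_le h0 h1 l).trans (exp_le_exp.mpr h)
    _ = (q / l) ^ q := by
        rw [← exp_one_rpow q, ← mul_rpow (by positivity) (exp_pos 1).le]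
        congr 1
        simp only [c]
        field_simp

theorem pnorm_le_div_log_one_add (hX : HasBinomialDist X N α) (hm : Measurable X)
    (h0 : 0 ≤ α) (h1 : α ≤ 1) {q B : ℝ} (hq : 0 < q) (hB : 0 < B) (h : α * N * B ≤ q) :
    pnorm X q ≤ q / log (1 + B) := by
  have hlog : 0 < log (1 + B) := log_pos (by linarith)
  refine pnorm_le_of_integral_le hq (by positivity) (hX.integral_abs_rpow_le hm h0 h1 hq hlog ?_)
  rwa [exp_log (by linarith), add_sub_cancel_left]

end HasBinomialDist

theorem div_four_le_log_one_add {B : ℝ} (h0 : 0 ≤ B) (h3 : B ≤ 3) : B / 4 ≤ log (1 + B) := by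
  refine le_trans ?_ (le_log_one_add_of_nonneg h0)
  rw [div_le_div_iff₀ (by norm_num) (by linarith)]
  nlinarith

theorem binomial_moment_bound :
    ∃ C : ℝ, 0 < C ∧
      ∀ (Ω : Type) [MeasureSpace Ω] [IsProbabilityMeasure (ℙ : Measure Ω)]
        (N : ℕ) (α : ℝ) (X : Ω → ℝ), 1 ≤ N → α ∈ Set.Ioo (0 : ℝ) 1 →
        Measurable X → HasBinomialDist X N α →
        ∀ q : ℝ, 1 ≤ q →
          (Real.exp 1 ≤ q / (α * max (N : ℝ) q) →
            pnorm X q ≤ C * q / Real.log (q / (α * max (N : ℝ) q))) ∧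
          (q / (α * max (N : ℝ) q) < Real.exp 1 →
            pnorm X q ≤ C * q / (q / (α * max (N : ℝ) q))) := by
  refine ⟨4, by norm_num, ?_⟩
  intro Ω _ _ N α X _ ⟨hα0, hα1⟩ hm hX q hq
  have hq0 : 0 < q := by linarith
  have hmax : 0 < α * max (N : ℝ) q := mul_pos hα0 (lt_max_of_lt_right hq0)
  set B := q / (α * max (N : ℝ) q)
  have hB : 0 < B := div_pos hq0 hmax
  have hbound : pnorm X q ≤ q / log (1 + B) := by
    refine hX.pnorm_le_div_log_one_add hm hα0.le hα1.le hq0 hB ?_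
    calc α * N * B ≤ α * max (N : ℝ) q * B := by gcongr; exact le_max_left _ _
      _ = q := mul_div_cancel₀ q hmax.ne'
  constructor
  · intro hBe
    have hlogB : 0 < log B := log_pos (by linarith [add_one_le_exp 1])
    calc pnorm X q ≤ q / log (1 + B) := hbound
      _ ≤ q / log B := by gcongr; linarith
      _ ≤ 4 * q / log B := by gcongr; linarith
  · intro hBe
    calc pnorm X q ≤ q / log (1 + B) := hbound
      _ ≤ q / (B / 4) := by
          gcongr
          exact div_four_le_log_one_add hB.le (by linarith [exp_one_lt_d9])
      _ = 4 * q / B := by ring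
end

section
/- Let q ≥ 1 be a real number and let X_1, …, X_n be independent random variables with E|X_i|^q < ∞ for each i, such that for every T > 0, ‖∑_{i=1}^n X_i/T‖_q^q ≤ ∏_{i=1}^n φ_q(X_i/T). Then there is a universal constant C > 0 such that ‖∑_{i=1}^n X_i‖_q ≤ C·inf{ T > 0 : ∑_{i=1}^n log E[|1 + X_i/T|^q] ≤ q }. -/
open MeasureTheory ProbabilityTheory Finset Real

/-!
For `T` in the set `{T > 0 | ∑ᵢ log φ_q(Xᵢ/T) ≤ q}`, the hypothesis gives
`‖∑ Xᵢ‖_q^q / T^q ≤ ∏ᵢ φ_q(Xᵢ/T) ≤ e^q`, i.e. `‖∑ Xᵢ‖_q ≤ e T`; so `C = e` works as soon as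
the set is nonempty. It is, because `φ_q(Xᵢ/T) → 1` as `T → ∞` by dominated convergence.
-/

open Filter Topology

lemma abs_one_add_div_rpow_le {q x c : ℝ} (hq : 0 ≤ q) (hc : 1 ≤ c) :
    |1 + x / c| ^ q ≤ 2 ^ q * (1 + |x| ^ q) := by
  have hc0 : 0 < c := one_pos.trans_le hc
  have hdiv : |x / c| ≤ |x| := by
    rw [abs_div, abs_of_pos hc0]
    exact div_le_self (abs_nonneg x) hc
  have hmax : |1 + x / c| ≤ 2 * max 1 |x| := by
    have := abs_add_le 1 (x / c)
    rw [abs_one] at this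
    linarith [le_max_left 1 |x|, le_max_right 1 |x|]
  have hmax_rpow : max 1 |x| ^ q ≤ 1 + |x| ^ q := by
    rcases le_total |x| 1 with h | h
    · rw [max_eq_left h, one_rpow]
      linarith [rpow_nonneg (abs_nonneg x) q]
    · rw [max_eq_right h]
      linarith
  calc |1 + x / c| ^ q ≤ (2 * max 1 |x|) ^ q := rpow_le_rpow (abs_nonneg _) hmax hq
    _ = 2 ^ q * max 1 |x| ^ q := mul_rpow zero_le_two (zero_le_one.trans (le_max_left _ _))
    _ ≤ 2 ^ q * (1 + |x| ^ q) := by gcongr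

lemma prod_le_exp_of_sum_log_le {ι : Type*} (s : Finset ι) {a : ι → ℝ} {b : ℝ}
    (ha : ∀ i ∈ s, 0 ≤ a i) (h : ∑ i ∈ s, log (a i) ≤ b) : ∏ i ∈ s, a i ≤ exp b :=
  calc ∏ i ∈ s, a i ≤ ∏ i ∈ s, exp (log (a i)) :=
        prod_le_prod ha fun i _ => le_exp_log (a i)
    _ = exp (∑ i ∈ s, log (a i)) := (exp_sum s _).symm
    _ ≤ exp b := exp_le_exp.mpr h

section Moments

variable {Ω : Type*} [MeasureSpace Ω]

lemma pnorm_nonneg (Y : Ω → ℝ) (q : ℝ) : 0 ≤ pnorm Y q :=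
  rpow_nonneg (integral_nonneg fun _ => rpow_nonneg (abs_nonneg _) _) _

lemma pnorm_div_const (Y : Ω → ℝ) {q T : ℝ} (hq : 0 < q) (hT : 0 < T) :
    pnorm (fun ω => Y ω / T) q = pnorm Y q / T := by
  have hpoint : ∀ ω, |Y ω / T| ^ q = |Y ω| ^ q / T ^ q := fun ω => by
    rw [abs_div, abs_of_pos hT, div_rpow (abs_nonneg _) hT.le]
  simp only [pnorm, hpoint, integral_div]
  rw [div_rpow (integral_nonneg fun _ => rpow_nonneg (abs_nonneg _) _) (rpow_nonneg hT.le _),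
    ← rpow_mul hT.le, mul_one_div_cancel hq.ne', rpow_one]

lemma le_exp_one_mul_of_pnorm_div_rpow_le {Y : Ω → ℝ} {q T : ℝ} (hq : 0 < q) (hT : 0 < T)
    (h : pnorm (fun ω => Y ω / T) q ^ q ≤ exp q) : pnorm Y q ≤ exp 1 * T := by
  rw [pnorm_div_const Y hq hT, ← exp_one_rpow,
    rpow_le_rpow_iff (div_nonneg (pnorm_nonneg Y q) hT.le) (exp_pos 1).le hq,
    div_le_iff₀ hT] at h
  exact h

variable [IsProbabilityMeasure (ℙ : Measure Ω)]

lemma tendsto_integral_abs_one_add_div_rpow {Y : Ω → ℝ} (hY : Measurable Y) {q : ℝ}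
    (hq : 0 ≤ q) (hint : Integrable fun ω => |Y ω| ^ q) :
    Tendsto (fun T => ∫ ω, |1 + Y ω / T| ^ q) atTop (𝓝 1) := by
  have hcont : Continuous fun t : ℝ => |1 + t| ^ q :=
    (continuous_const.add continuous_id).abs.rpow_const fun _ => Or.inr hq
  have hlim := tendsto_integral_filter_of_dominated_convergence
    (μ := ℙ) (F := fun T ω => |1 + Y ω / T| ^ q) (f := fun _ => 1)
    (fun ω => 2 ^ q * (1 + |Y ω| ^ q))
    (Eventually.of_forall fun T =>
      (hcont.measurable.comp (hY.div_const T)).aestronglyMeasurable)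
    ((eventually_ge_atTop 1).mono fun T hT => Eventually.of_forall fun ω => by
      rw [norm_of_nonneg (rpow_nonneg (abs_nonneg _) _)]
      exact abs_one_add_div_rpow_le hq hT)
    (((integrable_const 1).add hint).const_mul _)
    (Eventually.of_forall fun ω => by
      simpa [Function.comp_def] using (hcont.tendsto 0).comp (tendsto_const_nhds.div_atTop tendsto_id))
  simpa using hlim

lemma exists_sum_log_integral_le {ι : Type*} [Fintype ι] {X : ι → Ω → ℝ}
    (hX : ∀ i, Measurable (X i)) {q : ℝ} (hq : 0 < q)
    (hint : ∀ i, Integrable fun ω => |X i ω| ^ q) :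
    ∃ T, 0 < T ∧ ∑ i, log (∫ ω, |1 + X i ω / T| ^ q) ≤ q := by
  have hsum : Tendsto (fun T => ∑ i, log (∫ ω, |1 + X i ω / T| ^ q)) atTop
      (𝓝 (∑ _i : ι, log 1)) :=
    tendsto_finsetSum _ fun i _ => (continuousAt_log one_ne_zero).tendsto.comp
      (tendsto_integral_abs_one_add_div_rpow (hX i) hq.le (hint i))
  rw [log_one, sum_const_zero] at hsum
  obtain ⟨T, hT, hlog⟩ :=
    ((eventually_gt_atTop 0).and (hsum.eventually_lt_const hq)).exists
  exact ⟨T, hT, hlog.le⟩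

end Moments

theorem latala_upper_bound_from_phi :
    ∃ C : ℝ, 0 < C ∧
      ∀ (Ω : Type) [MeasureSpace Ω] [IsProbabilityMeasure (ℙ : Measure Ω)]
        (n : ℕ) (X : Fin n → Ω → ℝ), (∀ i, Measurable (X i)) →
        iIndepFun X ℙ →
        ∀ q : ℝ, 1 ≤ q → (∀ i, Integrable (fun ω => |X i ω| ^ q)) →
        (∀ T : ℝ, 0 < T →
          (pnorm (fun ω => ∑ i, X i ω / T) q) ^ q ≤ ∏ i, ∫ ω, |1 + X i ω / T| ^ q) →
        pnorm (fun ω => ∑ i, X i ω) q ≤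
          C * sInf {T : ℝ | 0 < T ∧ ∑ i, Real.log (∫ ω, |1 + X i ω / T| ^ q) ≤ q} := by
  refine ⟨exp 1, exp_pos 1, fun Ω _ _ n X hX _ q hq hint h => ?_⟩
  have hq0 : 0 < q := one_pos.trans_le hq
  obtain ⟨T₀, hT₀⟩ := exists_sum_log_integral_le hX hq0 hint
  have hbound : ∀ T, 0 < T → ∑ i, log (∫ ω, |1 + X i ω / T| ^ q) ≤ q →
      pnorm (fun ω => ∑ i, X i ω) q ≤ exp 1 * T := fun T hT hlog => by
    refine le_exp_one_mul_of_pnorm_div_rpow_le hq0 hT ?_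
    simp only [sum_div]
    exact (h T hT).trans <| prod_le_exp_of_sum_log_le _
      (fun i _ => integral_nonneg fun _ => rpow_nonneg (abs_nonneg _) _) hlog
  rw [← div_le_iff₀' (exp_pos 1)]
  exact le_csInf ⟨T₀, hT₀⟩ fun T ⟨hT, hlog⟩ => by
    rw [div_le_iff₀' (exp_pos 1)]
    exact hbound T hT hlog
end

section
/- Let q ≥ 2 be a real number and let Y_1, …, Y_n be independent symmetric random variables with E|Y_i|^q < ∞ for each i. Then φ_q(∑_{i=1}^n Y_i) ≤ ∏_{i=1}^n φ_q(Y_i). -/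
/-!
Write `h(x) = |1 + x|^q + |1 - x|^q` (`phiPair q x`). For independent symmetric `X`, `Y` the
four pairs `(±X, ±Y)` are equidistributed, so
`4 φ_q(X + Y) = E[h(X + Y) + h(X - Y)] ≤ E[h(X) h(Y)] = E h(X) · E h(Y) = 4 φ_q(X) φ_q(Y)`,
provided the scalar inequality `h(x + y) + h(x - y) ≤ h(x) h(y)` holds. The theorem then follows
by induction, sums of independent symmetric variables being symmetric.

For the scalar inequality take `x, y ≥ 0` and `e = xy/2`, so that `(1 ± x)(1 ± y) = 1 ± x ± y ± 2e`.
Expanding `h(x) h(y)` into these four products, the inequality becomes one between values of the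
central difference `Φ(u) = |u + e|^q - |u - e|^q`. This `Φ` is odd, nondecreasing (as `|u|^q` is
convex) and convex on `[0, ∞)`: its derivative is a central difference of `q |u|^(q-2) u`, which
is odd and convex on `[0, ∞)` when `q ≥ 2`. For an odd function `ψ` convex on `[0, ∞)` and
`m ≥ 0`, the sum `ψ(m + s) + ψ(m - s)` grows with `|s|`, and this compares the two sides.
-/

open MeasureTheory ProbabilityTheory Finset Real

/-- A random variable is symmetric if it has the same distribution as its negative. -/
def IsSymmetricRV {Ω : Type*} [MeasureSpace Ω] (X : Ω → ℝ) : Prop :=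
  Measure.map X ℙ = Measure.map (fun ω => -X ω) ℙ

theorem ConvexOn.apply_add_sub_apply_le {s : Set ℝ} {f : ℝ → ℝ} (hf : ConvexOn ℝ s f)
    {a b d : ℝ} (ha : a ∈ s) (hbd : b + d ∈ s) (hab : a ≤ b) (hd : 0 ≤ d) :
    f (a + d) - f a ≤ f (b + d) - f b := by
  rcases hd.eq_or_lt with rfl | hd
  · simp
  have hmem : ∀ x ∈ Set.Icc a (b + d), x ∈ s := fun x hx ↦ hf.1.ordConnected.out ha hbd hx
  -- both increments are compared with the secant over `[a, b + d]`
  have h₁ := hf.secant_mono ha (hmem (a + d) ⟨by linarith, by linarith⟩) hbd (by linarith)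
    (by linarith) (by linarith)
  have h₂ := hf.secant_mono hbd ha (hmem b ⟨hab, by linarith⟩) (by linarith) (by linarith) hab
  rw [← neg_div_neg_eq, neg_sub, neg_sub, ← neg_div_neg_eq (f b - _), neg_sub, neg_sub,
    add_sub_cancel_left] at h₂
  rw [add_sub_cancel_left] at h₁
  exact (div_le_div_iff_of_pos_right hd).1 (h₁.trans h₂)

theorem Function.Odd.apply_add_add_apply_sub_le {ψ : ℝ → ℝ} (hodd : ψ.Odd)
    (hconv : ConvexOn ℝ (Set.Ici 0) ψ) {m s t : ℝ} (hm : 0 ≤ m) (hst : |s| ≤ t) :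
    ψ (m + s) + ψ (m - s) ≤ ψ (m + t) + ψ (m - t) := by
  wlog hs : 0 ≤ s generalizing s
  · have := this (s := -s) (by rwa [abs_neg]) (by linarith)
    rw [sub_neg_eq_add, ← sub_eq_add_neg] at this
    linarith
  have hts : s ≤ t := (le_abs_self s).trans hst
  obtain ⟨c, hc₀, hcm, hc⟩ : ∃ c, 0 ≤ c ∧ c ≤ m + s ∧
      ψ (m - s) - ψ (m - t) ≤ ψ (c + (t - s)) - ψ c := by
    rcases le_total 0 (m - t) with hmt | hmt
    · exact ⟨m - t, hmt, by linarith, by rw [sub_add_sub_cancel]⟩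
    rcases le_total (m - s) 0 with hms | hms
    · refine ⟨s - m, by linarith, by linarith, le_of_eq ?_⟩
      rw [show m - s = -(s - m) by ring, show m - t = -(t - m) by ring, hodd.eq, hodd.eq,
        sub_add_sub_cancel']
      ring
    · -- superadditivity of `ψ` on `[0, ∞)`: `ψ (m - s) + ψ (t - m) ≤ ψ (t - s)`
      refine ⟨0, le_rfl, by linarith, ?_⟩
      have := hconv.apply_add_sub_apply_le (d := m - s) Set.self_mem_Ici
        (Set.mem_Ici.2 (by linarith)) (show 0 ≤ t - m by linarith) hms
      rw [zero_add, sub_add_sub_cancel, hodd.map_zero] at this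
      rw [show m - t = -(t - m) by ring, hodd.eq, zero_add, hodd.map_zero]
      linarith
  have := hconv.apply_add_sub_apply_le (d := t - s) hc₀ (Set.mem_Ici.2 (by linarith)) hcm
    (by linarith)
  rw [add_add_sub_cancel] at this
  linarith

theorem convexOn_Ici_centralDifference {g g' : ℝ → ℝ} (hg : ∀ x, HasDerivAt g (g' x) x)
    (hodd : g'.Odd) (hconv : ConvexOn ℝ (Set.Ici 0) g') {e : ℝ} (he : 0 ≤ e) :
    ConvexOn ℝ (Set.Ici 0) (fun u ↦ g (u + e) - g (u - e)) := by
  have hΦ : ∀ u, HasDerivAt (fun u ↦ g (u + e) - g (u - e)) (g' (u + e) - g' (u - e)) u :=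
    fun u ↦ ((hg _).comp_add_const u e).sub ((hg _).comp_sub_const u e)
  have hdiff : Differentiable ℝ (fun u ↦ g (u + e) - g (u - e)) :=
    fun u ↦ (hΦ u).differentiableAt
  refine MonotoneOn.convexOn_of_deriv (convex_Ici 0) hdiff.continuous.continuousOn
    hdiff.differentiableOn ?_
  rw [interior_Ici]
  intro a ha b hb hab
  rw [(hΦ a).deriv, (hΦ b).deriv]
  have := hodd.apply_add_add_apply_sub_le hconv (m := (a + b) / 2) (s := (b - a) / 2 - e)
    (t := (b - a) / 2 + e) (by linarith [Set.mem_Ioi.1 ha, Set.mem_Ioi.1 hb])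
    (abs_le.2 ⟨by linarith, by linarith⟩)
  ring_nf at this ⊢
  linarith

theorem convexOn_abs_rpow {p : ℝ} (hp : 1 ≤ p) :
    ConvexOn ℝ Set.univ (fun x : ℝ ↦ |x| ^ p) := by
  have himage : (fun x : ℝ ↦ |x|) '' Set.univ = Set.Ici 0 := by
    ext y
    simpa using ⟨fun ⟨x, hx⟩ ↦ hx ▸ abs_nonneg x, fun hy ↦ ⟨y, abs_of_nonneg hy⟩⟩
  refine ConvexOn.comp (g := fun x : ℝ ↦ x ^ p) (himage ▸ convexOn_rpow hp)
    ((convexOn_univ_norm (E := ℝ)).congr fun _ _ ↦ norm_eq_abs _) ?_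
  rw [himage]
  exact fun a ha b _ hab ↦ rpow_le_rpow ha hab (by linarith)

theorem convexOn_Ici_mul_abs_rpow_sub_two_mul {q : ℝ} (hq : 2 ≤ q) :
    ConvexOn ℝ (Set.Ici 0) (fun x : ℝ ↦ q * |x| ^ (q - 2) * x) := by
  refine ((convexOn_rpow (p := q - 1) (by linarith)).smul (by linarith : (0 : ℝ) ≤ q)).congr ?_
  intro x (hx : 0 ≤ x)
  rcases hx.eq_or_lt with rfl | hx
  · simp [zero_rpow (by linarith : q - 1 ≠ 0)]
  · simp only [smul_eq_mul]
    rw [abs_of_pos hx, mul_assoc, ← rpow_add_one hx.ne']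
    ring_nf

/-- `phiPair q x / 2` is `φ_q` of the symmetric two-point random variable `±x`. -/
noncomputable def phiPair (q x : ℝ) : ℝ := |1 + x| ^ q + |1 - x| ^ q

theorem phiPair_neg (q x : ℝ) : phiPair q (-x) = phiPair q x := by
  rw [phiPair, phiPair, ← sub_eq_add_neg, sub_neg_eq_add, add_comm]

theorem phiPair_mul (q x y : ℝ) : phiPair q x * phiPair q y =
    |(1 + x) * (1 + y)| ^ q + |(1 + x) * (1 - y)| ^ q + |(1 - x) * (1 + y)| ^ q +
      |(1 - x) * (1 - y)| ^ q := by
  simp only [phiPair, abs_mul, mul_rpow (abs_nonneg _) (abs_nonneg _)]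
  ring

theorem measurable_phiPair (q : ℝ) : Measurable (phiPair q) := by
  unfold phiPair
  fun_prop

theorem phiPair_add_add_phiPair_sub_le_of_nonneg {q x y : ℝ} (hq : 2 ≤ q) (hx : 0 ≤ x)
    (hy : 0 ≤ y) : phiPair q (x + y) + phiPair q (x - y) ≤ phiPair q x * phiPair q y := by
  set e := x * y / 2
  have he₀ : 0 ≤ e := by positivity
  set Φ : ℝ → ℝ := fun u ↦ |u + e| ^ q - |u - e| ^ q
  have hΦodd : Φ.Odd := fun u ↦ by
    simp only [Φ]
    rw [show -u + e = -(u - e) by ring, show -u - e = -(u + e) by ring, abs_neg, abs_neg, neg_sub]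
  have hΦconv : ConvexOn ℝ (Set.Ici 0) Φ :=
    convexOn_Ici_centralDifference (fun x ↦ hasDerivAt_abs_rpow x (by linarith))
      (fun x ↦ by simp) (convexOn_Ici_mul_abs_rpow_sub_two_mul hq) he₀
  have hΦmono : ∀ u, Φ (u - e) ≤ Φ (u + e) := fun u ↦ by
    have := (convexOn_abs_rpow (p := q) (by linarith)).apply_add_sub_apply_le
      (a := u - 2 * e) (b := u) (d := 2 * e) trivial trivial (by linarith) (by linarith)
    simp only [Φ]
    ring_nf at this ⊢
    linarith
  have key : Φ (1 + x - y - e) + Φ (1 - x + y - e) ≤ Φ (1 + x + y + e) + Φ (1 - x - y + e) := by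
    have hspread := hΦodd.apply_add_add_apply_sub_le hΦconv (m := x + e) (s := 1 - y)
      (t := 1 + y) (by positivity) (abs_le.2 ⟨by linarith, by linarith⟩)
    rw [show x + e + (1 - y) = 1 + x - y + e by ring,
      show x + e - (1 - y) = -(1 - x - y - e) by ring, show x + e + (1 + y) = 1 + x + y + e by ring,
      show x + e - (1 + y) = -(1 - x + y - e) by ring, hΦodd.eq, hΦodd.eq] at hspread
    linarith [hΦmono (1 + x - y), hΦmono (1 - x - y)]
  have hval : ∀ {u v w : ℝ}, u + e = v → u - e = w → Φ u = |v| ^ q - |w| ^ q := by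
    rintro u v w rfl rfl
    rfl
  rw [hval (v := 1 + (x - y)) (w := (1 + x) * (1 - y)) (by ring) (by ring),
    hval (v := 1 - (x - y)) (w := (1 - x) * (1 + y)) (by ring) (by ring),
    hval (v := (1 + x) * (1 + y)) (w := 1 + (x + y)) (by ring) (by ring),
    hval (v := (1 - x) * (1 - y)) (w := 1 - (x + y)) (by ring) (by ring)] at key
  rw [phiPair_mul, phiPair, phiPair]
  linarith

theorem phiPair_add_add_phiPair_sub_le {q : ℝ} (hq : 2 ≤ q) (x y : ℝ) :
    phiPair q (x + y) + phiPair q (x - y) ≤ phiPair q x * phiPair q y := by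
  wlog hx : 0 ≤ x generalizing x
  · have := this (-x) (by linarith)
    rwa [show -x + y = -(x - y) by ring, show -x - y = -(x + y) by ring, phiPair_neg,
      phiPair_neg, phiPair_neg, add_comm] at this
  wlog hy : 0 ≤ y generalizing y
  · have := this (-y) (by linarith)
    rwa [← sub_eq_add_neg, sub_neg_eq_add, phiPair_neg, add_comm] at this
  exact phiPair_add_add_phiPair_sub_le_of_nonneg hq hx hy

theorem ProbabilityTheory.IdentDistrib.add {Ω Ω' E : Type*} {mΩ : MeasurableSpace Ω}
    {mΩ' : MeasurableSpace Ω'} {μ : Measure Ω} {ν : Measure Ω'} [IsFiniteMeasure μ]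
    [MeasurableSpace E] [Add E] [MeasurableAdd₂ E] {X Y : Ω → E} {X' Y' : Ω' → E}
    (hX : IdentDistrib X X' μ ν) (hY : IdentDistrib Y Y' μ ν) (hXY : IndepFun X Y μ)
    (hXY' : IndepFun X' Y' ν) : IdentDistrib (X + Y) (X' + Y') μ ν :=
  (hX.prodMk hY hXY hXY').comp measurable_add

theorem IsSymmetricRV.identDistrib {Ω : Type*} [MeasureSpace Ω] {X : Ω → ℝ}
    (hX : IsSymmetricRV X) (hXm : AEMeasurable X) : IdentDistrib X (-X) ℙ ℙ :=
  ⟨hXm, hXm.neg, hX⟩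

section

variable {Ω : Type*} {mΩ : MeasurableSpace Ω} {μ : Measure Ω} {q : ℝ}

theorem integrable_abs_rpow_iff_memLp {Z : Ω → ℝ} (hZ : AEStronglyMeasurable Z μ) (hq : 0 < q) :
    Integrable (fun ω ↦ |Z ω| ^ q) μ ↔ MemLp Z (ENNReal.ofReal q) μ := by
  have := integrable_norm_rpow_iff hZ (p := ENNReal.ofReal q) (by simpa using hq)
    ENNReal.ofReal_ne_top
  simpa only [ENNReal.toReal_ofReal hq.le, norm_eq_abs] using this

theorem MeasureTheory.MemLp.integrable_phiPair {Z : Ω → ℝ} (hq : 0 < q)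
    (hZ : MemLp Z (ENNReal.ofReal q) μ) [IsFiniteMeasure μ] :
    Integrable (fun ω ↦ phiPair q (Z ω)) μ := by
  have h₁ : MemLp (fun ω ↦ 1 + Z ω) (ENNReal.ofReal q) μ := (memLp_const (1 : ℝ)).add hZ
  have h₂ : MemLp (fun ω ↦ 1 - Z ω) (ENNReal.ofReal q) μ := (memLp_const (1 : ℝ)).sub hZ
  exact ((integrable_abs_rpow_iff_memLp h₁.1 hq).2 h₁).add
    ((integrable_abs_rpow_iff_memLp h₂.1 hq).2 h₂)

variable [IsProbabilityMeasure μ]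

theorem ProbabilityTheory.IdentDistrib.symmetric_add {X Y : Ω → ℝ}
    (hX : IdentDistrib X (-X) μ μ) (hY : IdentDistrib Y (-Y) μ μ) (hXY : IndepFun X Y μ) :
    IdentDistrib (X + Y) (-(X + Y)) μ μ := by
  rw [neg_add]
  exact hX.add hY hXY (hXY.comp measurable_neg measurable_neg)

theorem integral_phiPair_of_identDistrib_neg {Z : Ω → ℝ} (hq : 0 < q)
    (hZ : IdentDistrib Z (-Z) μ μ) (hZq : MemLp Z (ENNReal.ofReal q) μ) :
    ∫ ω, phiPair q (Z ω) ∂μ = 2 * ∫ ω, |1 + Z ω| ^ q ∂μ := by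
  have hflip : ∫ ω, |1 - Z ω| ^ q ∂μ = ∫ ω, |1 + Z ω| ^ q ∂μ := by
    have := (hZ.comp (u := fun z ↦ |1 + z| ^ q) (by fun_prop)).integral_eq
    simpa [sub_eq_add_neg] using this.symm
  have h₁ : MemLp (fun ω ↦ 1 + Z ω) (ENNReal.ofReal q) μ := (memLp_const (1 : ℝ)).add hZq
  have h₂ : MemLp (fun ω ↦ 1 - Z ω) (ENNReal.ofReal q) μ := (memLp_const (1 : ℝ)).sub hZq
  simp only [phiPair]
  rw [integral_add ((integrable_abs_rpow_iff_memLp h₁.1 hq).2 h₁)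
    ((integrable_abs_rpow_iff_memLp h₂.1 hq).2 h₂), hflip, two_mul]

theorem ProbabilityTheory.IndepFun.integral_abs_one_add_add_rpow_le (hq : 2 ≤ q) {X Y : Ω → ℝ}
    (hXY : IndepFun X Y μ) (hX : IdentDistrib X (-X) μ μ) (hY : IdentDistrib Y (-Y) μ μ)
    (hXq : MemLp X (ENNReal.ofReal q) μ) (hYq : MemLp Y (ENNReal.ofReal q) μ) :
    ∫ ω, |1 + (X ω + Y ω)| ^ q ∂μ ≤ (∫ ω, |1 + X ω| ^ q ∂μ) * ∫ ω, |1 + Y ω| ^ q ∂μ := by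
  have hq₀ : 0 < q := by linarith
  have hXY' : IndepFun X (-Y) μ := hXY.comp measurable_id measurable_neg
  have hY' : IdentDistrib (-Y) (-(-Y)) μ μ := by
    rw [neg_neg]
    exact hY.symm
  have hsum := integral_phiPair_of_identDistrib_neg hq₀ (hX.symmetric_add hY hXY) (hXq.add hYq)
  have hdiff := integral_phiPair_of_identDistrib_neg hq₀ (hX.symmetric_add hY' hXY')
    (hXq.add hYq.neg)
  have hflip : ∫ ω, |1 + (X + -Y) ω| ^ q ∂μ = ∫ ω, |1 + (X + Y) ω| ^ q ∂μ :=
    (((IdentDistrib.refl hX.aemeasurable_fst).add hY.symm hXY' hXY).comp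
      (u := fun z ↦ |1 + z| ^ q) (by fun_prop)).integral_eq
  have hprod : ∫ ω, phiPair q (X ω) * phiPair q (Y ω) ∂μ
      = (∫ ω, phiPair q (X ω) ∂μ) * ∫ ω, phiPair q (Y ω) ∂μ :=
    hXY.integral_fun_comp_mul_comp hX.aemeasurable_fst hY.aemeasurable_fst
      (measurable_phiPair q).aestronglyMeasurable (measurable_phiPair q).aestronglyMeasurable
  have hle : ∫ ω, phiPair q ((X + Y) ω) + phiPair q ((X + -Y) ω) ∂μ
      ≤ ∫ ω, phiPair q (X ω) * phiPair q (Y ω) ∂μ := by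
    refine integral_mono ((hXq.add hYq).integrable_phiPair hq₀ |>.add
      ((hXq.add hYq.neg).integrable_phiPair hq₀)) ?_ fun ω ↦ ?_
    · exact (hXY.comp (measurable_phiPair q) (measurable_phiPair q)).integrable_mul
        (hXq.integrable_phiPair hq₀) (hYq.integrable_phiPair hq₀)
    · simpa [sub_eq_add_neg] using phiPair_add_add_phiPair_sub_le hq (X ω) (Y ω)
  rw [integral_add ((hXq.add hYq).integrable_phiPair hq₀)
    ((hXq.add hYq.neg).integrable_phiPair hq₀), hsum, hdiff, hflip, hprod,
    integral_phiPair_of_identDistrib_neg hq₀ hX hXq,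
    integral_phiPair_of_identDistrib_neg hq₀ hY hYq] at hle
  simp only [Pi.add_apply] at hle
  linarith

variable {ι : Type*} {Y : ι → Ω → ℝ}

theorem ProbabilityTheory.iIndepFun.identDistrib_finsetSum_neg (hindep : iIndepFun Y μ)
    (hY : ∀ i, IdentDistrib (Y i) (-Y i) μ μ) (s : Finset ι) :
    IdentDistrib (∑ i ∈ s, Y i) (-∑ i ∈ s, Y i) μ μ := by
  classical
  induction s using Finset.induction_on with
  | empty =>
    rw [sum_empty, neg_zero]
    exact IdentDistrib.refl aemeasurable_const
  | insert i s hi ih =>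
    rw [sum_insert hi]
    exact (hY i).symmetric_add ih
      (hindep.indepFun_finsetSum_of_notMem₀ (fun j ↦ (hY j).aemeasurable_fst) hi).symm

theorem ProbabilityTheory.iIndepFun.integral_abs_one_add_sum_rpow_le (hq : 2 ≤ q)
    (hindep : iIndepFun Y μ) (hY : ∀ i, IdentDistrib (Y i) (-Y i) μ μ)
    (hYq : ∀ i, MemLp (Y i) (ENNReal.ofReal q) μ) (s : Finset ι) :
    ∫ ω, |1 + ∑ i ∈ s, Y i ω| ^ q ∂μ ≤ ∏ i ∈ s, ∫ ω, |1 + Y i ω| ^ q ∂μ := by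
  classical
  induction s using Finset.induction_on with
  | empty => simp
  | insert i s hi ih =>
    have hstep := IndepFun.integral_abs_one_add_add_rpow_le hq
      (hindep.indepFun_finsetSum_of_notMem₀ (fun j ↦ (hY j).aemeasurable_fst) hi).symm (hY i)
      (hindep.identDistrib_finsetSum_neg hY s) (hYq i) (memLp_finsetSum' s fun j _ ↦ hYq j)
    simp only [Finset.sum_apply] at hstep
    calc ∫ ω, |1 + ∑ j ∈ insert i s, Y j ω| ^ q ∂μ
        = ∫ ω, |1 + (Y i ω + ∑ j ∈ s, Y j ω)| ^ q ∂μ := by simp_rw [sum_insert hi]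
      _ ≤ (∫ ω, |1 + Y i ω| ^ q ∂μ) * ∫ ω, |1 + ∑ j ∈ s, Y j ω| ^ q ∂μ := hstep
      _ ≤ (∫ ω, |1 + Y i ω| ^ q ∂μ) * ∏ j ∈ s, ∫ ω, |1 + Y j ω| ^ q ∂μ :=
        mul_le_mul_of_nonneg_left ih (integral_nonneg fun ω ↦ by positivity)
      _ = ∏ j ∈ insert i s, ∫ ω, |1 + Y j ω| ^ q ∂μ := by rw [prod_insert hi]

end

theorem phi_submultiplicative_symmetric
    (Ω : Type) [MeasureSpace Ω] [IsProbabilityMeasure (ℙ : Measure Ω)]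
    (n : ℕ) (Y : Fin n → Ω → ℝ) (hmeas : ∀ i, Measurable (Y i))
    (hindep : iIndepFun Y ℙ)
    (hsymm : ∀ i, IsSymmetricRV (Y i))
    (q : ℝ) (hq : 2 ≤ q) (hint : ∀ i, Integrable (fun ω => |Y i ω| ^ q)) :
    ∫ ω, |1 + ∑ i, Y i ω| ^ q ≤ ∏ i, ∫ ω, |1 + Y i ω| ^ q := by
  have hYq : ∀ i, MemLp (Y i) (ENNReal.ofReal q) ℙ := fun i ↦
    (integrable_abs_rpow_iff_memLp (hmeas i).aestronglyMeasurable (by linarith)).1 (hint i)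
  exact hindep.integral_abs_one_add_sum_rpow_le hq
    (fun i ↦ (hsymm i).identDistrib (hmeas i).aemeasurable) hYq univ
end

section
/- Let q ≥ 2 be a real number and let Y be a symmetric random variable with E|Y|^q < ∞. Then E[|Y|^q] ≤ φ_q(Y), i.e., ‖Y‖_q^q ≤ E[|1 + Y|^q]. -/
open MeasureTheory ProbabilityTheory Finset Real

/-! Averaging `|1 + y|^q` and `|1 - y|^q` dominates `|y|^q` by convexity of `|·|^q`, and symmetry
of `Y` makes `|1 + Y|^q` and `|1 - Y|^q` equidistributed, so the average of their expectations is
`φ_q(Y)` itself. -/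

lemma abs_add_div_two_rpow_le {p : ℝ} (hp : 1 ≤ p) (a b : ℝ) :
    |(a + b) / 2| ^ p ≤ (|a| ^ p + |b| ^ p) / 2 := by
  have hmid : |(a + b) / 2| ≤ (1 / 2 : ℝ) • |a| + (1 / 2 : ℝ) • |b| := by
    rw [abs_div, abs_two, smul_eq_mul, smul_eq_mul]
    linarith [abs_add_le a b]
  calc |(a + b) / 2| ^ p ≤ ((1 / 2 : ℝ) • |a| + (1 / 2 : ℝ) • |b|) ^ p :=
        rpow_le_rpow (abs_nonneg _) hmid (by linarith)
    _ ≤ (1 / 2 : ℝ) • |a| ^ p + (1 / 2 : ℝ) • |b| ^ p :=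
        (convexOn_rpow hp).2 (abs_nonneg a) (abs_nonneg b) (by norm_num) (by norm_num) (by norm_num)
    _ = (|a| ^ p + |b| ^ p) / 2 := by simp only [smul_eq_mul]; ring

lemma abs_rpow_le_abs_one_add_rpow_add_abs_one_sub_rpow_div_two {p : ℝ} (hp : 1 ≤ p) (y : ℝ) :
    |y| ^ p ≤ (|1 + y| ^ p + |1 - y| ^ p) / 2 := by
  have h := abs_add_div_two_rpow_le hp (1 + y) (y - 1)
  rwa [show (1 + y + (y - 1)) / 2 = y by ring, abs_sub_comm] at h

lemma integrable_abs_const_add_rpow {Ω : Type*} [MeasurableSpace Ω] {μ : Measure Ω}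
    [IsFiniteMeasure μ] {Y : Ω → ℝ} (hY : AEStronglyMeasurable Y μ) {q : ℝ} (hq : 0 < q)
    (hint : Integrable (fun ω => |Y ω| ^ q) μ) (c : ℝ) :
    Integrable (fun ω => |c + Y ω| ^ q) μ := by
  have hYq : MemLp Y (ENNReal.ofReal q) μ := by
    rw [← integrable_norm_rpow_iff hY (by simpa using hq) ENNReal.ofReal_ne_top]
    simpa [ENNReal.toReal_ofReal hq.le] using hint
  simpa [ENNReal.toReal_ofReal hq.le] using ((memLp_const c).add hYq).integrable_norm_rpow'

lemma IsSymmetricRV.identDistrib_neg {Ω : Type*} [MeasureSpace Ω] {X : Ω → ℝ}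
    (hX : IsSymmetricRV X) (hXm : AEMeasurable X) : IdentDistrib X (fun ω => -X ω) :=
  ⟨hXm, hXm.neg, hX⟩

theorem moment_le_phi_symmetric
    (Ω : Type) [MeasureSpace Ω] [IsProbabilityMeasure (ℙ : Measure Ω)]
    (Y : Ω → ℝ) (hmeas : Measurable Y) (hsymm : IsSymmetricRV Y)
    (q : ℝ) (hq : 2 ≤ q) (hint : Integrable (fun ω => |Y ω| ^ q)) :
    ∫ ω, |Y ω| ^ q ≤ ∫ ω, |1 + Y ω| ^ q := by
  have hq1 : 1 ≤ q := by linarith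
  have hsame : IdentDistrib (fun ω => |1 + Y ω| ^ q) (fun ω => |1 - Y ω| ^ q) := by
    convert ((hsymm.identDistrib_neg hmeas.aemeasurable).comp (u := fun x => |1 - x| ^ q)
      (by fun_prop)).symm using 1
    · ext ω
      simp only [Function.comp_apply, sub_neg_eq_add]
    · rfl
  have hIadd := integrable_abs_const_add_rpow hmeas.aestronglyMeasurable (by linarith) hint 1
  have hIsub := hsame.integrable_iff.1 hIadd
  calc ∫ ω, |Y ω| ^ q ≤ ∫ ω, (|1 + Y ω| ^ q + |1 - Y ω| ^ q) / 2 :=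
        integral_mono hint ((hIadd.add hIsub).div_const 2) fun ω =>
          abs_rpow_le_abs_one_add_rpow_add_abs_one_sub_rpow_div_two hq1 (Y ω)
    _ = ((∫ ω, |1 + Y ω| ^ q) + ∫ ω, |1 - Y ω| ^ q) / 2 := by
        rw [integral_div, integral_add hIadd hIsub]
    _ = ∫ ω, |1 + Y ω| ^ q := by rw [← hsame.integral_eq]; ring
end

section
/- Let q ≥ 1 be a real number and let X_1, …, X_n be independent nonnegative random variables with E[X_i^q] < ∞ for each i. Then E[(1 + ∑_{i=1}^n X_i)^q] ≤ ∏_{i=1}^n E[(1 + X_i)^q]. -/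
/-!
Pointwise, `1 + ∑ xᵢ ≤ ∏ (1 + xᵢ)` for nonnegative `xᵢ`, and `t ↦ t ^ q` is monotone, so
`(1 + ∑ Xᵢ) ^ q ≤ ∏ (1 + Xᵢ) ^ q`. The factors `(1 + Xᵢ) ^ q` are independent and integrable
(`1 + Xᵢ` lies in `L^q`), so their product is integrable and its expectation splits into the
product of the expectations.
-/

open MeasureTheory ProbabilityTheory Finset Real

theorem Finset.one_add_sum_le_prod_one_add {ι : Type*} (s : Finset ι) {x : ι → ℝ}
    (hx : ∀ i ∈ s, 0 ≤ x i) : 1 + ∑ i ∈ s, x i ≤ ∏ i ∈ s, (1 + x i) := by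
  induction s using Finset.cons_induction with
  | empty => simp
  | cons a s ha ih =>
    rw [sum_cons, prod_cons]
    have hxa : 0 ≤ x a := hx a (mem_cons_self a s)
    have hxs : ∀ i ∈ s, 0 ≤ x i := fun i hi => hx i (mem_cons_of_mem hi)
    nlinarith [ih hxs, sum_nonneg hxs]

theorem Real.one_add_sum_rpow_le_prod {ι : Type*} (s : Finset ι) {x : ι → ℝ}
    (hx : ∀ i ∈ s, 0 ≤ x i) {q : ℝ} (hq : 0 ≤ q) :
    (1 + ∑ i ∈ s, x i) ^ q ≤ ∏ i ∈ s, (1 + x i) ^ q := by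
  have hx1 : ∀ i ∈ s, 0 ≤ 1 + x i := fun i hi => by linarith [hx i hi]
  rw [finsetProd_rpow s _ hx1]
  exact rpow_le_rpow (by linarith [sum_nonneg hx]) (one_add_sum_le_prod_one_add s hx) hq

theorem MeasureTheory.Integrable.one_add_rpow {α : Type*} [MeasurableSpace α] {μ : Measure α}
    [IsFiniteMeasure μ] {f : α → ℝ} (hf : AEStronglyMeasurable f μ) (hf0 : 0 ≤ f) {q : ℝ}
    (hq : 0 < q) (hint : Integrable (fun x => f x ^ q) μ) :
    Integrable (fun x => (1 + f x) ^ q) μ := by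
  have hq' : ENNReal.ofReal q ≠ 0 := by simpa using hq
  have hmem : MemLp f (ENNReal.ofReal q) μ := by
    rw [← integrable_norm_rpow_iff hf hq' ENNReal.ofReal_ne_top, ENNReal.toReal_ofReal hq.le]
    exact hint.congr (ae_of_all _ fun x => by simp only [norm_of_nonneg (hf0 x)])
  have h := ((memLp_const (1 : ℝ)).add hmem).integrable_norm_rpow hq' ENNReal.ofReal_ne_top
  rw [ENNReal.toReal_ofReal hq.le] at h
  exact h.congr (ae_of_all _ fun x => by
    simp only [Pi.add_apply, norm_of_nonneg (add_nonneg zero_le_one (hf0 x))])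

theorem ProbabilityTheory.iIndepFun.integrable_fun_prod {Ω ι : Type*} [MeasurableSpace Ω]
    {μ : Measure Ω} {Y : ι → Ω → ℝ} (hY : iIndepFun Y μ) (hmeas : ∀ i, Measurable (Y i))
    (hint : ∀ i, Integrable (Y i) μ) (s : Finset ι) :
    Integrable (fun ω => ∏ i ∈ s, Y i ω) μ := by
  refine ⟨aestronglyMeasurable_fun_prod s fun i _ => (hint i).1, ?_⟩
  have hnorm : iIndepFun (fun i ω => ‖Y i ω‖ₑ) μ :=
    hY.comp (fun _ x => ‖x‖ₑ) fun _ => measurable_enorm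
  rw [hasFiniteIntegral_iff_enorm]
  simp_rw [enorm_eq_nnnorm, nnnorm_prod, ENNReal.ofNNReal_finsetProd, ← enorm_eq_nnnorm]
  rw [lintegral_prod_eq_prod_lintegral_of_indepFun s _ hnorm fun i => (hmeas i).enorm]
  exact ENNReal.prod_lt_top fun i _ => (hint i).2

theorem phi_submultiplicative_nonneg
    (Ω : Type) [MeasureSpace Ω] [IsProbabilityMeasure (ℙ : Measure Ω)]
    (n : ℕ) (X : Fin n → Ω → ℝ) (hmeas : ∀ i, Measurable (X i))
    (hnonneg : ∀ i, 0 ≤ X i)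
    (hindep : iIndepFun X ℙ)
    (q : ℝ) (hq : 1 ≤ q) (hint : ∀ i, Integrable (fun ω => X i ω ^ q)) :
    ∫ ω, (1 + ∑ i, X i ω) ^ q ≤ ∏ i, ∫ ω, (1 + X i ω) ^ q := by
  have hq0 : 0 < q := by linarith
  have hfun_meas : Measurable fun x : ℝ => (1 + x) ^ q := by fun_prop
  set Y : Fin n → Ω → ℝ := fun i ω => (1 + X i ω) ^ q
  have hY : iIndepFun Y := hindep.comp (fun _ x => (1 + x) ^ q) fun _ => hfun_meas
  have hYmeas : ∀ i, Measurable (Y i) := fun i => hfun_meas.comp (hmeas i)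
  have hYint : ∀ i, Integrable (Y i) := fun i =>
    (hint i).one_add_rpow (hmeas i).aestronglyMeasurable (hnonneg i) hq0
  calc ∫ ω, (1 + ∑ i, X i ω) ^ q ≤ ∫ ω, ∏ i, Y i ω :=
        integral_mono_of_nonneg (ae_of_all _ fun ω =>
          rpow_nonneg (add_nonneg zero_le_one (sum_nonneg fun i _ => hnonneg i ω)) q)
          (hY.integrable_fun_prod hYmeas hYint univ)
          (ae_of_all _ fun ω => one_add_sum_rpow_le_prod univ (fun i _ => hnonneg i ω) hq0.le)
    _ = ∏ i, ∫ ω, Y i ω :=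
        hY.integral_fun_prod_eq_prod_integral fun i => (hYmeas i).aestronglyMeasurable
end
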